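/- Let Σ̂ be an n×n real symmetric positive definite matrix, λ > 0, and X an n×n real symmetric matrix with Σ̂⁻¹ + λ⁻¹X ≻ 0; set R := (Σ̂⁻¹ + λ⁻¹X)⁻¹. Define the quadratic form q(δλ, δX) := λ⁻¹·tr(R·δX·R·δX) − 2λ⁻²·δλ·tr(R·δX·R·X) + λ⁻³·δλ²·tr(R·X·R·X) for δλ ∈ ℝ and δX real symmetric. Then q(δλ, δX) ≥ 0 for all (δλ, δX), and q(δλ, δX) = 0 if and only if λ·δX = δλ·X; that is, the Hessian of F at (λ, X) is positive semidefinite with kernel exactly the one-dimensional span of (λ, X). -/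

import Mathlib

/-!
Put `M := λ δX - δλ X`. Expanding the trace shows `q(δλ, δX) = λ⁻³ tr(R M R M)`. Writing
`R = B * B` with `B = √R` symmetric, `tr(R M R M) = tr((B M B)ᴴ (B M B))` is the squared
Frobenius norm of `B M B`; it is nonnegative and vanishes iff `B M B = 0`, that is iff `M = 0`,
since `B` is invertible.
-/

/-- The quadratic form given by the second variation of `F` at `(λ, X)`, with
`R := (Ŝ⁻¹ + λ⁻¹X)⁻¹`. -/
noncomputable def hessForm {n : ℕ} (S : Matrix (Fin n) (Fin n) ℝ)
    (l : ℝ) (X : Matrix (Fin n) (Fin n) ℝ)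
    (dl : ℝ) (dX : Matrix (Fin n) (Fin n) ℝ) : ℝ :=
  l⁻¹ * ((S⁻¹ + l⁻¹ • X)⁻¹ * dX * (S⁻¹ + l⁻¹ • X)⁻¹ * dX).trace
    - 2 * l⁻¹ ^ 2 * dl * ((S⁻¹ + l⁻¹ • X)⁻¹ * dX * (S⁻¹ + l⁻¹ • X)⁻¹ * X).trace
    + l⁻¹ ^ 3 * dl ^ 2 * ((S⁻¹ + l⁻¹ • X)⁻¹ * X * (S⁻¹ + l⁻¹ • X)⁻¹ * X).trace

open Matrix
open scoped MatrixOrder ComplexOrder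

namespace Matrix

variable {ι 𝕜 : Type*} [Fintype ι] [DecidableEq ι] [RCLike 𝕜] {R M : Matrix ι ι 𝕜}

lemma PosSemidef.trace_mul_mul_mul_self_eq (hR : R.PosSemidef) (hM : M.IsHermitian) :
    (R * M * R * M).trace =
      ((CFC.sqrt R * M * CFC.sqrt R)ᴴ * (CFC.sqrt R * M * CFC.sqrt R)).trace := by
  set B := CFC.sqrt R
  have hB : Bᴴ = B := (CFC.sqrt_nonneg R).posSemidef.isHermitian
  have hBB : B * B = R := CFC.sqrt_mul_sqrt_self R hR.nonneg
  calc (R * M * R * M).trace = (B * (B * M * B * B * M)).trace := by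
        simp only [← hBB, Matrix.mul_assoc]
    _ = (B * M * B * B * M * B).trace := trace_mul_comm _ _
    _ = ((B * M * B)ᴴ * (B * M * B)).trace := by
        simp only [conjTranspose_mul, hB, hM.eq, Matrix.mul_assoc]

lemma PosSemidef.trace_mul_mul_mul_self_nonneg (hR : R.PosSemidef) (hM : M.IsHermitian) :
    0 ≤ (R * M * R * M).trace := by
  rw [hR.trace_mul_mul_mul_self_eq hM]
  exact (posSemidef_conjTranspose_mul_self _).trace_nonneg

lemma PosDef.trace_mul_mul_mul_self_eq_zero_iff (hR : R.PosDef) (hM : M.IsHermitian) :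
    (R * M * R * M).trace = 0 ↔ M = 0 := by
  have hB : IsUnit (CFC.sqrt R) := (CFC.isUnit_sqrt_iff R hR.posSemidef.nonneg).mpr hR.isUnit
  rw [hR.posSemidef.trace_mul_mul_mul_self_eq hM, trace_conjTranspose_mul_self_eq_zero_iff,
    hB.mul_left_eq_zero, hB.mul_right_eq_zero]

end Matrix

lemma hessForm_eq_trace {n : ℕ} (S : Matrix (Fin n) (Fin n) ℝ) {l : ℝ} (hl : l ≠ 0)
    (X : Matrix (Fin n) (Fin n) ℝ) (dl : ℝ) (dX : Matrix (Fin n) (Fin n) ℝ) :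
    hessForm S l X dl dX = l⁻¹ ^ 3 * ((S⁻¹ + l⁻¹ • X)⁻¹ * (l • dX - dl • X) *
      (S⁻¹ + l⁻¹ • X)⁻¹ * (l • dX - dl • X)).trace := by
  unfold hessForm
  set R := (S⁻¹ + l⁻¹ • X)⁻¹
  have hcross : (R * X * R * dX).trace = (R * dX * R * X).trace := by
    simpa only [Matrix.mul_assoc] using trace_mul_comm (R * X) (R * dX)
  simp only [Matrix.mul_sub, Matrix.sub_mul, Matrix.mul_smul, Matrix.smul_mul,
    trace_sub, trace_smul, smul_eq_mul, hcross]
  field_simp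
  ring

theorem stmt14_general {n : ℕ} (S : Matrix (Fin n) (Fin n) ℝ)
    (l : ℝ) (hl : 0 < l) (X : Matrix (Fin n) (Fin n) ℝ) (hX : X.IsSymm)
    (hpd : (S⁻¹ + l⁻¹ • X).PosDef)
    (dl : ℝ) (dX : Matrix (Fin n) (Fin n) ℝ) (hdX : dX.IsSymm) :
    0 ≤ hessForm S l X dl dX ∧
    (hessForm S l X dl dX = 0 ↔ l • dX = dl • X) := by
  have hM : (l • dX - dl • X).IsHermitian :=
    isHermitian_iff_isSymm.mpr ((hdX.smul l).sub (hX.smul dl))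
  rw [hessForm_eq_trace S hl.ne']
  refine ⟨mul_nonneg (by positivity) (hpd.inv.posSemidef.trace_mul_mul_mul_self_nonneg hM), ?_⟩
  rw [mul_eq_zero, or_iff_right (by positivity), hpd.inv.trace_mul_mul_mul_self_eq_zero_iff hM,
    sub_eq_zero]

/-- The Hessian quadratic form `q` of `F` at `(λ, X)` is positive
semidefinite, and `q(δλ, δX) = 0` iff `λ·δX = δλ·X`: its kernel is exactly the span of
`(λ, X)`. -/
theorem stmt14 {n : ℕ} (S : Matrix (Fin n) (Fin n) ℝ) (hS : S.PosDef)
    (l : ℝ) (hl : 0 < l) (X : Matrix (Fin n) (Fin n) ℝ) (hX : X.IsSymm)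
    (hpd : (S⁻¹ + l⁻¹ • X).PosDef)
    (dl : ℝ) (dX : Matrix (Fin n) (Fin n) ℝ) (hdX : dX.IsSymm) :
    0 ≤ hessForm S l X dl dX ∧
    (hessForm S l X dl dX = 0 ↔ l • dX = dl • X) :=
  stmt14_general S l hl X hX hpd dl dX hdX
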